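/- The function F^L(x) = x − Σ_{j=1}^{L} 2^{−2j} G^j(x), with G(x) = min{2x, 2(1−x)}, is convex on [0,1]. -/

import Mathlib

/-!
On `[0, 1]` the iterates of the tooth function are differences of the periodic arch
`q(y) = {y}(1 - {y})`, namely `G^{j+1}(x) = 4 q(2^j x) - q(2^{j+1} x)`. The sum defining `F^L`
therefore telescopes to `F^L(x) = x² + 4^{-L} q(2^L x) = 4^{-L} g(2^L x)`, where
`g(y) = y² + q(y)` is the piecewise linear interpolation of `y²` at the integers. The function `g`
is convex, being the upper envelope of its chords `y ↦ (2n+1) y - n(n+1)`.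
-/

/-- The tooth function `G(x) = min (2x) (2(1-x))`. -/
noncomputable def sawG (x : ℝ) : ℝ := min (2 * x) (2 * (1 - x))

/-- The sawtooth approximation `F^L(x) = x - ∑_{j=1}^L 2^{-2j} G^j(x)`. -/
noncomputable def sawF (L : ℕ) (x : ℝ) : ℝ :=
  x - ∑ j ∈ Finset.Icc 1 L, (2 : ℝ) ^ (-(2 * (j : ℤ))) * sawG^[j] x

open Set

theorem convexOn_of_forall_exists_affineMap_le_eq {𝕜 E β : Type*} [Ring 𝕜] [PartialOrder 𝕜]
    [AddCommGroup E] [Module 𝕜 E] [AddCommGroup β] [PartialOrder β] [IsOrderedAddMonoid β]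
    [Module 𝕜 β] [PosSMulMono 𝕜 β] {s : Set E} {f : E → β} (hs : Convex 𝕜 s)
    (h : ∀ z ∈ s, ∃ ℓ : E →ᵃ[𝕜] β, (∀ w ∈ s, ℓ w ≤ f w) ∧ ℓ z = f z) : ConvexOn 𝕜 s f := by
  refine ⟨hs, fun x hx y hy a b ha hb hab => ?_⟩
  obtain ⟨ℓ, hle, heq⟩ := h _ (hs hx hy ha hb hab)
  calc f (a • x + b • y) = ℓ (a • x + b • y) := heq.symm
    _ = a • ℓ x + b • ℓ y := Convex.combo_affine_apply hab
    _ ≤ a • f x + b • f y :=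
      add_le_add (smul_le_smul_of_nonneg_left (hle x hx) ha)
        (smul_le_smul_of_nonneg_left (hle y hy) hb)

section FractArch

variable {R : Type*} [Field R] [LinearOrder R] [IsStrictOrderedRing R] [FloorRing R]

def fractArch (y : R) : R := Int.fract y * (1 - Int.fract y)

lemma fractArch_intCast_add (m : ℤ) (y : R) : fractArch (m + y) = fractArch y := by
  rw [fractArch, fractArch, Int.fract_intCast_add]

lemma fractArch_neg (y : R) : fractArch (-y) = fractArch y := by
  by_cases hy : Int.fract y = 0
  · rw [fractArch, fractArch, Int.fract_neg_eq_zero.mpr hy, hy]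
  · rw [fractArch, fractArch, Int.fract_neg hy]
    ring

lemma fractArch_of_mem_Icc {y : R} (hy : y ∈ Icc (0 : R) 1) : fractArch y = y * (1 - y) := by
  rcases hy.2.lt_or_eq with h | rfl
  · rw [fractArch, Int.fract_eq_self.mpr ⟨hy.1, h⟩]
  · simp [fractArch]

lemma chord_le_sq_add_fractArch (n : ℤ) (y : R) :
    (2 * n + 1) * y - n * (n + 1) ≤ y ^ 2 + fractArch y := by
  have hy : y = ⌊y⌋ + Int.fract y := (Int.floor_add_fract y).symm
  have ht := Int.fract_nonneg y
  have ht' := (Int.fract_lt_one y).le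
  set k := ⌊y⌋ - n
  have hgap : y ^ 2 + fractArch y - ((2 * n + 1) * y - n * (n + 1))
      = (k : R) * (k - 1 + 2 * Int.fract y) := by
    rw [fractArch]
    push_cast [k]
    linear_combination (y + ⌊y⌋ + Int.fract y - 2 * n - 1) * hy
  have hk : (k : R) ≤ -1 ∨ (k : R) = 0 ∨ 1 ≤ (k : R) := by
    exact_mod_cast (by omega : k ≤ -1 ∨ k = 0 ∨ 1 ≤ k)
  rcases hk with hk | hk | hk <;> nlinarith

lemma sq_add_fractArch_eq_chord (y : R) :
    y ^ 2 + fractArch y = (2 * ⌊y⌋ + 1) * y - ⌊y⌋ * (⌊y⌋ + 1) := by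
  have hy : y = ⌊y⌋ + Int.fract y := (Int.floor_add_fract y).symm
  rw [fractArch]
  linear_combination (y - ⌊y⌋ + Int.fract y - 1) * hy

theorem convexOn_sq_add_fractArch : ConvexOn R univ fun y : R => y ^ 2 + fractArch y := by
  refine convexOn_of_forall_exists_affineMap_le_eq convex_univ fun z _ => ?_
  let chord : R →ᵃ[R] R := ((2 * ⌊z⌋ + 1 : R) • LinearMap.id).toAffineMap +
    AffineMap.const R R (-((⌊z⌋ : R) * (⌊z⌋ + 1)))
  have hchord (w : R) : chord w = (2 * ⌊z⌋ + 1) * w - ⌊z⌋ * (⌊z⌋ + 1) := by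
    simp [chord, sub_eq_add_neg]
  refine ⟨chord, fun w _ => ?_, ?_⟩
  · rw [hchord]
    exact chord_le_sq_add_fractArch _ w
  · rw [hchord, sq_add_fractArch_eq_chord]

end FractArch

lemma sawG_mem_Icc {x : ℝ} (hx : x ∈ Icc (0 : ℝ) 1) : sawG x ∈ Icc (0 : ℝ) 1 := by
  obtain ⟨h0, h1⟩ := hx
  rcases le_total x (1 / 2) with h | h
  · rw [sawG, min_eq_left (by linarith)]
    constructor <;> linarith
  · rw [sawG, min_eq_right (by linarith)]
    constructor <;> linarith

lemma sawG_eq_fractArch {x : ℝ} (hx : x ∈ Icc (0 : ℝ) 1) :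
    sawG x = 4 * fractArch x - fractArch (2 * x) := by
  obtain ⟨h0, h1⟩ := hx
  rw [fractArch_of_mem_Icc ⟨h0, h1⟩]
  rcases le_total x (1 / 2) with h | h
  · rw [sawG, min_eq_left (by linarith), fractArch_of_mem_Icc ⟨by linarith, by linarith⟩]
    ring
  · have h2 : 2 * x = ((1 : ℤ) : ℝ) + (2 * x - 1) := by push_cast; ring
    rw [sawG, min_eq_right (by linarith), h2, fractArch_intCast_add,
      fractArch_of_mem_Icc ⟨by linarith, by linarith⟩]
    ring

lemma fractArch_two_pow_mul_sawG (j : ℕ) (x : ℝ) :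
    fractArch (2 ^ j * sawG x) = fractArch (2 ^ (j + 1) * x) := by
  rcases le_total x (1 / 2) with h | h
  · rw [sawG, min_eq_left (by linarith), pow_succ]
    ring_nf
  · have h2 : (2 : ℝ) ^ j * (2 * (1 - x)) = ((2 ^ (j + 1) : ℤ) : ℝ) + -(2 ^ (j + 1) * x) := by
      push_cast
      ring
    rw [sawG, min_eq_right (by linarith), h2, fractArch_intCast_add, fractArch_neg]

lemma sawG_iterate_succ (j : ℕ) {x : ℝ} (hx : x ∈ Icc (0 : ℝ) 1) :
    sawG^[j + 1] x = 4 * fractArch (2 ^ j * x) - fractArch (2 ^ (j + 1) * x) := by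
  induction j generalizing x with
  | zero => simpa using sawG_eq_fractArch hx
  | succ j ih =>
    rw [Function.iterate_succ_apply, ih (sawG_mem_Icc hx), fractArch_two_pow_mul_sawG j,
      fractArch_two_pow_mul_sawG (j + 1)]

lemma sawF_succ (L : ℕ) (x : ℝ) : sawF (L + 1) x = sawF L x - sawG^[L + 1] x / 4 ^ (L + 1) := by
  have h4 : (2 : ℝ) ^ (-(2 * ((L + 1 : ℕ) : ℤ))) = (4 ^ (L + 1))⁻¹ := by
    rw [zpow_neg, zpow_mul, zpow_natCast]
    norm_num
  rw [sawF, sawF, Finset.sum_Icc_succ_top (by omega), h4]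
  ring

lemma sawF_eq (L : ℕ) {x : ℝ} (hx : x ∈ Icc (0 : ℝ) 1) :
    sawF L x = x ^ 2 + fractArch (2 ^ L * x) / 4 ^ L := by
  induction L with
  | zero =>
    rw [sawF, Finset.Icc_eq_empty (by norm_num), Finset.sum_empty, pow_zero, one_mul,
      fractArch_of_mem_Icc hx]
    ring
  | succ L ih =>
    rw [sawF_succ, ih, sawG_iterate_succ L hx]
    field_simp
    ring

/-- The function `F^L` is convex on the interval `[0, 1]`. -/
theorem sawF_convexOn (L : ℕ) : ConvexOn ℝ (Set.Icc (0 : ℝ) 1) (sawF L) := by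
  have hconv : ConvexOn ℝ univ
      fun x : ℝ => ((2 : ℝ) ^ L)⁻¹ ^ 2 • ((2 ^ L * x) ^ 2 + fractArch (2 ^ L * x)) :=
    (convexOn_sq_add_fractArch.comp_linearMap (LinearMap.lsmul ℝ ℝ (2 ^ L))).smul (by positivity)
  refine (hconv.subset (subset_univ _) (convex_Icc 0 1)).congr fun x hx => ?_
  have h4 : (4 : ℝ) ^ L = (2 ^ L) ^ 2 := by rw [← pow_mul, pow_mul']; norm_num
  simp only [sawF_eq L hx, smul_eq_mul, h4]
  field_simp
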